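/- arXiv:2402.04645 — 2 statements merged into one kernel-verified Lean document; each statement's English description precedes it below -/
import Mathlib

section
/- Fix a many-to-one instance I and a firm f with capacity parameter b. For nonnegative integers r ≤ s, if a worker w proposes to f at some point during the execution of worker-proposing deferred acceptance on the instance I^s (where f's capacity is s), then w also proposes to f during worker-proposing deferred acceptance on I^r (where f's capacity is r). -/
/-- A many-to-one matching instance: firms `F` with capacities, workers `W`,
strict preferences of workers over `Option F` (`none` = unmatched), strict
preferences of firms over individual workers (`Option W`, `none` = keeping a
seat empty) together with a responsive extension to sets of workers. -/
structure MTO (F W : Type) [DecidableEq W] where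
  cap : F → ℕ
  /-- `wlt w a b` : worker `w` strictly prefers `a` to `b`. -/
  wlt : W → Option F → Option F → Prop
  wlt_trans : ∀ w a b c, wlt w a b → wlt w b c → wlt w a c
  wlt_irrefl : ∀ w a, ¬ wlt w a a
  wlt_trichot : ∀ w a b, a = b ∨ wlt w a b ∨ wlt w b a
  /-- `flt1 f a b` : firm `f` strictly prefers (single) worker option `a` to `b`. -/
  flt1 : F → Option W → Option W → Prop
  flt1_trans : ∀ f a b c, flt1 f a b → flt1 f b c → flt1 f a c
  flt1_irrefl : ∀ f a, ¬ flt1 f a a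
  flt1_trichot : ∀ f a b, a = b ∨ flt1 f a b ∨ flt1 f b a
  /-- `flt f S T` : firm `f` strictly prefers the set `S` to the set `T`
  (responsive extension of `flt1`). -/
  flt : F → Finset W → Finset W → Prop
  flt_trans : ∀ f S T U, flt f S T → flt f T U → flt f S U
  flt_irrefl : ∀ f S, ¬ flt f S S
  resp_add : ∀ f (S : Finset W) (w : W), w ∉ S →
    (flt f (insert w S) S ↔ flt1 f (some w) none)
  resp_swap : ∀ f (S : Finset W) (w w' : W), w ∉ S → w' ∉ S → w ≠ w' →
    (flt f (insert w S) (insert w' S) ↔ flt1 f (some w) (some w'))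

variable {F W : Type} [DecidableEq W] [DecidableEq F] [Fintype W]

/-- The set of workers matched to firm `f` under the matching `μ`. -/
def matchedSet (μ : W → Option F) (f : F) : Finset W :=
  Finset.univ.filter (fun w => μ w = some f)

/-- `μ` respects all capacity constraints. -/
def MTO.isMatching (I : MTO F W) (μ : W → Option F) : Prop :=
  ∀ f, (matchedSet μ f).card ≤ I.cap f

/-- No agent is matched to an unacceptable partner. -/
def MTO.indivRational (I : MTO F W) (μ : W → Option F) : Prop :=
  (∀ w f, μ w = some f → ¬ I.wlt w none (some f)) ∧
  (∀ w f, μ w = some f → ¬ I.flt1 f none (some w))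

/-- The worker-firm pair `(w, f)` blocks `μ`. -/
def MTO.blocks (I : MTO F W) (μ : W → Option F) (w : W) (f : F) : Prop :=
  I.wlt w (some f) (μ w) ∧
  ∃ S ⊆ matchedSet μ f, (insert w S).card ≤ I.cap f ∧
    I.flt f (insert w S) (matchedSet μ f)

/-- Stability: a feasible, individually rational matching with no blocking pair. -/
def MTO.isStable (I : MTO F W) (μ : W → Option F) : Prop :=
  I.isMatching μ ∧ I.indivRational μ ∧ ∀ w f, ¬ I.blocks μ w f

/-- `μ` is the worker-optimal stable matching (output of WPDA). -/
def MTO.workerOptimal (I : MTO F W) (μ : W → Option F) : Prop :=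
  I.isStable μ ∧ ∀ μ', I.isStable μ' → ∀ w, μ' w = μ w ∨ I.wlt w (μ w) (μ' w)

/-- `μ` is the firm-optimal stable matching (output of FPDA). -/
def MTO.firmOptimal (I : MTO F W) (μ : W → Option F) : Prop :=
  I.isStable μ ∧ ∀ μ', I.isStable μ' → ∀ f,
    matchedSet μ' f = matchedSet μ f ∨ I.flt f (matchedSet μ f) (matchedSet μ' f)

/-- The instance obtained from `I` by setting the capacity of firm `f` to `b`. -/
def MTO.withCap (I : MTO F W) (f : F) (b : ℕ) : MTO F W :=
  { I with cap := Function.update I.cap f b }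

/-- The peak of firm `f`: the largest number of workers matched to `f` in any
stable matching for any choice of `f`'s capacity. -/
noncomputable def MTO.peak (I : MTO F W) (f : F) : ℕ :=
  sSup {n | ∃ b μ, (I.withCap f b).isStable μ ∧ (matchedSet μ f).card = n}

/-- `w` proposes to `f` at some point of WPDA, where `μ` is the worker-optimal
stable matching (i.e. the WPDA outcome): `w` finds `f` acceptable and `f` is
weakly preferred by `w` to its final WPDA match. -/
def MTO.proposesTo (I : MTO F W) (μ : W → Option F) (w : W) (f : F) : Prop :=
  I.wlt w (some f) none ∧ (μ w = some f ∨ I.wlt w (some f) (μ w))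

/-- All workers in `S` are acceptable to `f`. -/
def MTO.acceptableSet (I : MTO F W) (f : F) (S : Finset W) : Prop :=
  ∀ w ∈ S, ¬ I.flt1 f none (some w)

/-- Strongly monotone preferences: any larger acceptable set is strictly
preferred to any smaller acceptable set. -/
def MTO.stronglyMonotone (I : MTO F W) (f : F) : Prop :=
  ∀ S T : Finset W, I.acceptableSet f S → I.acceptableSet f T →
    T.card < S.card → I.flt f S T


/-! ### Auxiliary lemmas for the proof -/

section AuxProof

lemma MTO.wlt_asymm (J : MTO F W) (w : W) {a b : Option F} (h : J.wlt w a b) :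
    ¬ J.wlt w b a := fun h' => J.wlt_irrefl w a (J.wlt_trans w a b a h h')

lemma MTO.flt1_asymm (J : MTO F W) (g : F) {a b : Option W} (h : J.flt1 g a b) :
    ¬ J.flt1 g b a := fun h' => J.flt1_irrefl g a (J.flt1_trans g a b a h h')

lemma mem_matchedSet {μ : W → Option F} {g : F} {w : W} :
    w ∈ matchedSet μ g ↔ μ w = some g := by
  simp [matchedSet]

lemma MTO.flt_mono_aux (J : MTO F W) (g : F) (M : Finset W)
    (hacc : ∀ u ∈ M, J.flt1 g (some u) none) :
    ∀ n (S : Finset W), S ⊆ M → S ≠ M → M.card ≤ S.card + n → J.flt g M S := by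
  intro n
  induction n with
  | zero =>
    intro S hSM hne hle
    exact absurd (Finset.eq_of_subset_of_card_le hSM (by omega)) hne
  | succ n ih =>
    intro S hSM hne hle
    obtain ⟨u, huM, huS⟩ : ∃ u ∈ M, u ∉ S := by
      by_contra h
      push_neg at h
      exact hne (Finset.Subset.antisymm hSM h)
    have h1 : J.flt g (insert u S) S := (J.resp_add g S u huS).2 (hacc u huM)
    have hsub : insert u S ⊆ M := Finset.insert_subset huM hSM
    by_cases heq : insert u S = M
    · rwa [heq] at h1
    · exact J.flt_trans g M (insert u S) S
        (ih (insert u S) hsub heq (by rw [Finset.card_insert_of_notMem huS]; omega)) h1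

lemma MTO.flt_mono (J : MTO F W) (g : F) {M S : Finset W}
    (hacc : ∀ u ∈ M, J.flt1 g (some u) none) (hSM : S ⊆ M) (hne : S ≠ M) :
    J.flt g M S :=
  J.flt_mono_aux g M hacc M.card S hSM hne (by omega)

lemma MTO.flt_swapDom (J : MTO F W) (g : F) (M S : Finset W) (w : W)
    (hSM : S ⊆ M) (hwM : w ∉ M) (hcard : (insert w S).card ≤ M.card)
    (hacc : ∀ u ∈ M, J.flt1 g (some u) none)
    (hbet : ∀ u ∈ M, J.flt1 g (some u) (some w)) :
    J.flt g M (insert w S) := by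
  have hwS : w ∉ S := fun h => hwM (hSM h)
  have hlt : S.card < M.card := by
    rw [Finset.card_insert_of_notMem hwS] at hcard; omega
  obtain ⟨u, huM, huS⟩ : ∃ u ∈ M, u ∉ S := by
    by_contra h
    push_neg at h
    have : M ⊆ S := h
    have := Finset.card_le_card this
    omega
  have hne : u ≠ w := fun h => hwM (h ▸ huM)
  have h1 : J.flt g (insert u S) (insert w S) :=
    (J.resp_swap g S u w huS hwS hne).2 (hbet u huM)
  by_cases heq : insert u S = M
  · rwa [heq] at h1
  · exact J.flt_trans g M (insert u S) (insert w S)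
      (J.flt_mono g hacc (Finset.insert_subset huM hSM) heq) h1

/-- If a worker `w` acceptable to `g` prefers `g` to its match in a stable
matching, then `g`'s quota is filled. -/
lemma MTO.stable_full (J : MTO F W) (μ : W → Option F) (hst : J.isStable μ)
    (w : W) (g : F) (hw : J.wlt w (some g) (μ w)) (hacc : J.flt1 g (some w) none) :
    (matchedSet μ g).card = J.cap g := by
  have hle := hst.1 g
  rcases lt_or_eq_of_le hle with hlt | heq
  · exfalso
    have hwm : w ∉ matchedSet μ g := by
      rw [mem_matchedSet]
      intro h
      rw [h] at hw
      exact J.wlt_irrefl w _ hw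
    exact hst.2.2 w g ⟨hw, matchedSet μ g, Finset.Subset.refl _,
      by rw [Finset.card_insert_of_notMem hwm]; omega,
      (J.resp_add g _ w hwm).2 hacc⟩
  · exact heq

/-- If `w` prefers `g` to its match in a stable matching, every worker matched
to `g` is preferred by `g` to `w`. -/
lemma MTO.stable_better (J : MTO F W) (μ : W → Option F) (hst : J.isStable μ)
    (w : W) (g : F) (hw : J.wlt w (some g) (μ w)) {w' : W}
    (hw' : w' ∈ matchedSet μ g) :
    J.flt1 g (some w') (some w) := by
  have hμw : μ w ≠ some g := by
    intro h
    rw [h] at hw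
    exact J.wlt_irrefl w _ hw
  have hwm : w ∉ matchedSet μ g := by rw [mem_matchedSet]; exact hμw
  have hne : w' ≠ w := by
    intro h
    exact hwm (h ▸ hw')
  rcases J.flt1_trichot g (some w') (some w) with h | h | h
  · exact absurd (Option.some.inj h) hne
  · exact h
  · exfalso
    set S := (matchedSet μ g).erase w' with hS
    have hw'S : w' ∉ S := Finset.notMem_erase _ _
    have hwS : w ∉ S := fun hh => hwm (Finset.erase_subset _ _ hh)
    have hins : insert w' S = matchedSet μ g := Finset.insert_erase hw'
    have hcard : S.card + 1 = (matchedSet μ g).card := Finset.card_erase_add_one hw'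
    refine hst.2.2 w g ⟨hw, S, Finset.erase_subset _ _, ?_, ?_⟩
    · rw [Finset.card_insert_of_notMem hwS]
      have := hst.1 g
      omega
    · rw [← hins]
      exact (J.resp_swap g S w w' hwS hw'S (Ne.symm hne)).2 h

/-- If `g`'s quota is filled with acceptable workers all preferred to `w`,
then `(w, g)` cannot block. -/
lemma MTO.no_block_of_full (J : MTO F W) (μ : W → Option F) (w : W) (g : F)
    (hcard : (matchedSet μ g).card = J.cap g)
    (hacc : ∀ u ∈ matchedSet μ g, J.flt1 g (some u) none)
    (hbet : ∀ u ∈ matchedSet μ g, J.flt1 g (some u) (some w)) :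
    ¬ J.blocks μ w g := by
  rintro ⟨hw, S, hSM, hc, hflt⟩
  have hwm : w ∉ matchedSet μ g := by
    rw [mem_matchedSet]
    intro h
    rw [h] at hw
    exact J.wlt_irrefl w _ hw
  have hdom : J.flt g (matchedSet μ g) (insert w S) :=
    J.flt_swapDom g (matchedSet μ g) S w hSM hwm (by omega) hacc hbet
  exact J.flt_irrefl g _ (J.flt_trans g _ _ _ hflt hdom)

lemma MTO.withCap_cap (I : MTO F W) (f : F) (b : ℕ) (g : F) :
    (I.withCap f b).cap g = if g = f then b else I.cap g := by
  simp [MTO.withCap, Function.update_apply]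

/-- Comparative statics: decreasing firm `f`'s capacity makes every worker
weakly worse off under the worker-optimal stable matching. -/
lemma MTO.key_comparative_statics (I : MTO F W) (f : F) (r s : ℕ) (hrs : r ≤ s)
    (μs μr : W → Option F)
    (hs : (I.withCap f s).workerOptimal μs)
    (hr : (I.withCap f r).workerOptimal μr) :
    ∀ w, ¬ I.wlt w (μr w) (μs w) := by
  classical
  intro w0 hw0
  obtain ⟨hsst, hsopt⟩ := hs
  obtain ⟨hrst, _⟩ := hr
  set Js := I.withCap f s with hJsdef
  set Jr := I.withCap f r with hJrdef
  have hcaple : ∀ g, Jr.cap g ≤ Js.cap g := by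
    intro g
    rw [hJsdef, hJrdef, MTO.withCap_cap, MTO.withCap_cap]
    split <;> omega
  -- the set of workers strictly preferring μr to μs
  set B : Finset W := Finset.univ.filter (fun w => I.wlt w (μr w) (μs w)) with hBdef
  have hmemB : ∀ w, w ∈ B ↔ I.wlt w (μr w) (μs w) := by
    intro w; simp [hBdef]
  have hw0B : w0 ∈ B := (hmemB w0).2 hw0
  have hBmatch : ∀ w ∈ B, ∃ g, μr w = some g := by
    intro w hw
    cases hμ : μr w with
    | some g => exact ⟨g, rfl⟩
    | none =>
      exfalso
      rw [hmemB, hμ] at hw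
      cases hν : μs w with
      | none => rw [hν] at hw; exact I.wlt_irrefl w none hw
      | some h =>
        rw [hν] at hw
        exact hsst.2.1.1 w h hν hw
  set G : Finset F := B.biUnion (fun w => (μr w).toFinset) with hGdef
  have hmemG : ∀ g, g ∈ G ↔ ∃ w ∈ B, μr w = some g := by
    intro g
    simp only [hGdef, Finset.mem_biUnion, Option.mem_toFinset, Option.mem_def]
  -- firm-side individual rationality gives acceptability
  have hraccf : ∀ w g, μr w = some g → I.flt1 g (some w) none := by
    intro w g hwg
    rcases I.flt1_trichot g (some w) none with h | h | h
    · exact absurd h (by simp)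
    · exact h
    · exact absurd h (hrst.2.1.2 w g hwg)
  have hBw : ∀ w ∈ B, ∀ g, μr w = some g → I.wlt w (some g) (μs w) := by
    intro w hw g hg
    rw [hmemB, hg] at hw
    exact hw
  have hAfull : ∀ g ∈ G, (matchedSet μs g).card = Js.cap g := by
    intro g hg
    obtain ⟨w, hwB, hwg⟩ := (hmemG g).1 hg
    exact Js.stable_full μs hsst w g (hBw w hwB g hwg) (hraccf w g hwg)
  have hMbet : ∀ g w, I.wlt w (some g) (μr w) →
      ∀ w' ∈ matchedSet μr g, I.flt1 g (some w') (some w) := by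
    intro g w h w' hw'
    exact Jr.stable_better μr hrst w g h hw'
  have hAbet : ∀ g w, I.wlt w (some g) (μs w) →
      ∀ w' ∈ matchedSet μs g, I.flt1 g (some w') (some w) := by
    intro g w h w' hw'
    exact Js.stable_better μs hsst w g h hw'
  set U : Finset W := G.biUnion (fun g => matchedSet μs g \ matchedSet μr g) with hUdef
  set V : Finset W := G.biUnion (fun g => matchedSet μr g \ matchedSet μs g) with hVdef
  have hUB : U ⊆ B := by
    intro w hw
    simp only [hUdef, Finset.mem_biUnion, Finset.mem_sdiff] at hw
    obtain ⟨g, hg, hwA, hwM⟩ := hw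
    by_contra hwB
    have hνw : μs w = some g := mem_matchedSet.1 hwA
    have hμw : μr w ≠ some g := fun h => hwM (mem_matchedSet.2 h)
    have hwlt : I.wlt w (some g) (μr w) := by
      rcases I.wlt_trichot w (μr w) (μs w) with h | h | h
      · exact absurd (h.trans hνw) hμw
      · exact absurd ((hmemB w).2 h) hwB
      · rwa [hνw] at h
    obtain ⟨w1, hw1B, hw1g⟩ := (hmemG g).1 hg
    have h1 : I.flt1 g (some w1) (some w) :=
      hMbet g w hwlt w1 (mem_matchedSet.2 hw1g)
    have h2 : I.flt1 g (some w) (some w1) := hAbet g w1 (hBw w1 hw1B g hw1g) w hwA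
    exact I.flt1_irrefl g _ (I.flt1_trans g _ _ _ h1 h2)
  have hBV : B ⊆ V := by
    intro w hwB
    obtain ⟨g, hμw⟩ := hBmatch w hwB
    have hg : g ∈ G := (hmemG g).2 ⟨w, hwB, hμw⟩
    have hνw : μs w ≠ some g := by
      intro h
      have hh := (hmemB w).1 hwB
      rw [hμw, h] at hh
      exact I.wlt_irrefl w _ hh
    simp only [hVdef, Finset.mem_biUnion, Finset.mem_sdiff]
    exact ⟨g, hg, mem_matchedSet.2 hμw, fun h => hνw (mem_matchedSet.1 h)⟩
  have hUV : U ⊆ V := fun w hw => hBV (hUB hw)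
  have hdisjA : ∀ g ∈ G, ∀ h ∈ G, g ≠ h →
      Disjoint (matchedSet μs g \ matchedSet μr g) (matchedSet μs h \ matchedSet μr h) := by
    intro g _ h _ hgh
    rw [Finset.disjoint_left]
    intro x hxg hxh
    rw [Finset.mem_sdiff, mem_matchedSet] at hxg hxh
    exact hgh (Option.some.inj (hxg.1.symm.trans hxh.1))
  have hdisjM : ∀ g ∈ G, ∀ h ∈ G, g ≠ h →
      Disjoint (matchedSet μr g \ matchedSet μs g) (matchedSet μr h \ matchedSet μs h) := by
    intro g _ h _ hgh
    rw [Finset.disjoint_left]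
    intro x hxg hxh
    rw [Finset.mem_sdiff, mem_matchedSet] at hxg hxh
    exact hgh (Option.some.inj (hxg.1.symm.trans hxh.1))
  have hUcard : U.card = ∑ g ∈ G, (matchedSet μs g \ matchedSet μr g).card :=
    Finset.card_biUnion hdisjA
  have hVcard : V.card = ∑ g ∈ G, (matchedSet μr g \ matchedSet μs g).card :=
    Finset.card_biUnion hdisjM
  have hMle : ∀ g ∈ G, (matchedSet μr g).card ≤ (matchedSet μs g).card := by
    intro g hg
    calc (matchedSet μr g).card ≤ Jr.cap g := hrst.1 g
    _ ≤ Js.cap g := hcaple g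
    _ = (matchedSet μs g).card := (hAfull g hg).symm
  have hterm : ∀ g ∈ G,
      (matchedSet μr g \ matchedSet μs g).card ≤ (matchedSet μs g \ matchedSet μr g).card := by
    intro g hg
    have h1 := Finset.card_sdiff_add_card_inter (matchedSet μs g) (matchedSet μr g)
    have h2 := Finset.card_sdiff_add_card_inter (matchedSet μr g) (matchedSet μs g)
    have h3 := hMle g hg
    rw [Finset.inter_comm] at h2
    omega
  have hVU : V.card ≤ U.card := by
    rw [hUcard, hVcard]
    exact Finset.sum_le_sum hterm
  have hUeqV : U = V := Finset.eq_of_subset_of_card_le hUV hVU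
  have hsumeq : ∑ g ∈ G, (matchedSet μr g \ matchedSet μs g).card
      = ∑ g ∈ G, (matchedSet μs g \ matchedSet μr g).card := by
    rw [← hUcard, ← hVcard, hUeqV]
  have hMfull : ∀ g ∈ G, (matchedSet μr g).card = Js.cap g := by
    intro g hg
    have heach : (matchedSet μr g \ matchedSet μs g).card
        = (matchedSet μs g \ matchedSet μr g).card :=
      (Finset.sum_eq_sum_iff_of_le hterm).1 hsumeq g hg
    have h1 := Finset.card_sdiff_add_card_inter (matchedSet μs g) (matchedSet μr g)
    have h2 := Finset.card_sdiff_add_card_inter (matchedSet μr g) (matchedSet μs g)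
    have h3 := hAfull g hg
    rw [Finset.inter_comm] at h2
    omega
  have hBU : B ⊆ U := hUeqV ▸ hBV
  -- define the hybrid matching
  set lam : W → Option F := fun w => if w ∈ B then μr w else μs w with hlamdef
  have hlamA : ∀ g ∉ G, matchedSet lam g = matchedSet μs g := by
    intro g hgG
    ext w
    rw [mem_matchedSet, mem_matchedSet]
    simp only [hlamdef]
    by_cases hwB : w ∈ B
    · rw [if_pos hwB]
      constructor
      · intro h
        exact absurd ((hmemG g).2 ⟨w, hwB, h⟩) hgG
      · intro h
        exfalso
        have hwU := hBU hwB
        simp only [hUdef, Finset.mem_biUnion, Finset.mem_sdiff] at hwU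
        obtain ⟨g', hg', hwA', _⟩ := hwU
        have : g' = g := Option.some.inj ((mem_matchedSet.1 hwA').symm.trans h)
        exact hgG (this ▸ hg')
    · rw [if_neg hwB]
  have hlamM : ∀ g ∈ G, matchedSet lam g = matchedSet μr g := by
    intro g hg
    ext w
    rw [mem_matchedSet, mem_matchedSet]
    simp only [hlamdef]
    by_cases hwB : w ∈ B
    · rw [if_pos hwB]
    · rw [if_neg hwB]
      constructor
      · intro h
        by_contra hμ
        refine hwB (hUB ?_)
        simp only [hUdef, Finset.mem_biUnion, Finset.mem_sdiff]
        exact ⟨g, hg, mem_matchedSet.2 h, fun hh => hμ (mem_matchedSet.1 hh)⟩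
      · intro h
        by_contra hν
        refine hwB (hUB ?_)
        rw [hUeqV]
        simp only [hVdef, Finset.mem_biUnion, Finset.mem_sdiff]
        exact ⟨g, hg, mem_matchedSet.2 h, fun hh => hν (mem_matchedSet.1 hh)⟩
  have hlamw : ∀ w ∈ B, lam w = μr w := by
    intro w hw; simp only [hlamdef, if_pos hw]
  have hlamw' : ∀ w ∉ B, lam w = μs w := by
    intro w hw; simp only [hlamdef, if_neg hw]
  -- lam is stable in Js
  have hlst : Js.isStable lam := by
    refine ⟨?_, ⟨?_, ?_⟩, ?_⟩
    · intro g
      by_cases hg : g ∈ G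
      · rw [hlamM g hg, hMfull g hg]
      · rw [hlamA g hg]
        exact hsst.1 g
    · intro w g h
      by_cases hwB : w ∈ B
      · rw [hlamw w hwB] at h
        exact hrst.2.1.1 w g h
      · rw [hlamw' w hwB] at h
        exact hsst.2.1.1 w g h
    · intro w g h
      by_cases hwB : w ∈ B
      · rw [hlamw w hwB] at h
        exact hrst.2.1.2 w g h
      · rw [hlamw' w hwB] at h
        exact hsst.2.1.2 w g h
    · intro w g hblk
      obtain ⟨hwlt, S, hSl, hcS, hflt⟩ := hblk
      by_cases hg : g ∈ G
      · have hμpref : I.wlt w (some g) (μr w) := by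
          by_cases hwB : w ∈ B
          · rwa [hlamw w hwB] at hwlt
          · rw [hlamw' w hwB] at hwlt
            rcases I.wlt_trichot w (μr w) (μs w) with h | h | h
            · rwa [h]
            · exact absurd ((hmemB w).2 h) hwB
            · exact I.wlt_trans w _ _ _ hwlt h
        refine Js.no_block_of_full lam w g ?_ ?_ ?_ ⟨hwlt, S, hSl, hcS, hflt⟩
        · rw [hlamM g hg]
          exact hMfull g hg
        · rw [hlamM g hg]
          intro u hu
          exact hraccf u g (mem_matchedSet.1 hu)
        · rw [hlamM g hg]
          intro u hu
          exact hMbet g w hμpref u hu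
      · have hνpref : I.wlt w (some g) (μs w) := by
          by_cases hwB : w ∈ B
          · rw [hlamw w hwB] at hwlt
            exact I.wlt_trans w _ _ _ hwlt ((hmemB w).1 hwB)
          · rwa [hlamw' w hwB] at hwlt
        rw [hlamA g hg] at hSl hflt
        exact hsst.2.2 w g ⟨hνpref, S, hSl, hcS, hflt⟩
  -- contradiction with worker-optimality of μs
  rcases hsopt lam hlst w0 with h | h
  · rw [hlamw w0 hw0B] at h
    rw [h] at hw0
    exact I.wlt_irrefl w0 _ hw0
  · rw [hlamw w0 hw0B] at h
    exact I.wlt_asymm w0 hw0 h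

end AuxProof

/-- If worker `w` proposes to firm `f` during WPDA when `f`'s capacity is `s`,
then `w` also proposes to `f` during WPDA when `f`'s capacity is `r ≤ s`. -/
theorem wpda_proposals_antitone_in_capacity
    {F W : Type} [DecidableEq W] [DecidableEq F] [Fintype W]
    (I : MTO F W) (f : F) (r s : ℕ) (hrs : r ≤ s)
    (μs μr : W → Option F)
    (hs : (I.withCap f s).workerOptimal μs)
    (hr : (I.withCap f r).workerOptimal μr)
    (w : W) (hp : I.proposesTo μs w f) :
    I.proposesTo μr w f := by
  classical
  refine ⟨hp.1, ?_⟩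
  have hkey := I.key_comparative_statics f r s hrs μs μr hs hr w
  rcases I.wlt_trichot w (μr w) (some f) with h | h | h
  · exact Or.inl h
  · exfalso
    rcases hp.2 with h2 | h2
    · rw [← h2] at h
      exact hkey h
    · exact hkey (I.wlt_trans w _ _ _ h h2)
  · exact Or.inr h
end

section
/- When a firm f's capacity is strictly greater than its peak p_f, the set of workers matched to f in every stable matching of the instance equals the set of workers matched to f in the worker-optimal stable matching of the at-peak instance I^{p_f}. -/
variable {F W : Type} [DecidableEq W] [DecidableEq F] [Fintype W]

section Aux

variable {F W : Type} [DecidableEq W] [DecidableEq F] [Fintype W]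

lemma aux_mem_matchedSet {μ : W → Option F} {f : F} {w : W} :
    w ∈ matchedSet μ f ↔ μ w = some f := by
  simp [matchedSet]

lemma aux_withCap_cap_le (I : MTO F W) (f : F) {b : ℕ} (hb : b ≤ I.cap f) (g : F) :
    (I.withCap f b).cap g ≤ I.cap g := by
  by_cases h : g = f <;> simp [MTO.withCap, Function.update_apply, h, hb]

lemma aux_isStable_withCap (I : MTO F W) (f : F) {b : ℕ} {μ : W → Option F}
    (h : I.isStable μ) (hcard : (matchedSet μ f).card ≤ b) (hb : b ≤ I.cap f) :
    (I.withCap f b).isStable μ := by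
  obtain ⟨hm, hir, hnb⟩ := h
  refine ⟨?_, hir, ?_⟩
  · intro g
    by_cases hg : g = f
    · subst hg; simpa [MTO.withCap] using hcard
    · simpa [MTO.withCap, Function.update_apply, hg] using hm g
  · rintro w g ⟨hwlt, S, hS, hc, hflt⟩
    exact hnb w g ⟨hwlt, S, hS, hc.trans (aux_withCap_cap_le I f hb g), hflt⟩

lemma aux_flt1_some_none (I : MTO F W) (f : F) (w : W) (h : ¬ I.flt1 f none (some w)) :
    I.flt1 f (some w) none := by
  rcases I.flt1_trichot f (some w) none with h1 | h1 | h1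
  · exact absurd h1 (by simp)
  · exact h1
  · exact absurd h1 h

end Aux

/-- Above peak, the set of workers matched to `f` in every stable matching
equals the set matched to `f` in the worker-optimal stable matching of the
at-peak instance. -/
theorem above_peak_match_equals_at_peak_worker_optimal
    {F W : Type} [DecidableEq W] [DecidableEq F] [Fintype W]
    (I : MTO F W) (f : F) (hpeak : I.peak f < I.cap f)
    (μW : W → Option F) (hW : (I.withCap f (I.peak f)).workerOptimal μW)
    (μ : W → Option F) (hμ : I.isStable μ) :
    matchedSet μ f = matchedSet μW f := by
  classical
  set p := I.peak f with hp
  -- the peak set is bounded above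
  have hbdd : BddAbove {n | ∃ b ν, (I.withCap f b).isStable ν ∧ (matchedSet ν f).card = n} := by
    refine ⟨Fintype.card W, ?_⟩
    rintro n ⟨b, ν, -, rfl⟩
    exact (Finset.card_filter_le _ _).trans (le_of_eq Finset.card_univ)
  -- every stable matching of I gives f at most p workers
  have hcard : (matchedSet μ f).card ≤ p := by
    refine le_csSup hbdd ⟨I.cap f, μ, ?_, rfl⟩
    exact aux_isStable_withCap I f hμ (hμ.1 f) le_rfl
  -- μ is stable in I^p and in I^{p+1}
  have hμp : (I.withCap f p).isStable μ :=
    aux_isStable_withCap I f hμ hcard (le_of_lt hpeak)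
  have hμJ : (I.withCap f (p + 1)).isStable μ :=
    aux_isStable_withCap I f hμ (hcard.trans (Nat.le_succ p)) hpeak
  -- pointwise: μW matches every firm to at most as many workers as μ does
  have hle : ∀ g : F, (matchedSet μW g).card ≤ (matchedSet μ g).card := by
    intro g
    by_contra hlt
    push_neg at hlt
    have hns : ¬ matchedSet μW g ⊆ matchedSet μ g :=
      fun hs => absurd (Finset.card_le_card hs) (not_le.mpr hlt)
    obtain ⟨w, hwW, hwM⟩ := Finset.not_subset.mp hns
    have hμWw : μW w = some g := aux_mem_matchedSet.mp hwW
    have hwne : μ w ≠ some g := fun h => hwM (aux_mem_matchedSet.mpr h)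
    have hwlt : I.wlt w (some g) (μ w) := by
      rcases hW.2 μ hμp w with h | h
      · exact absurd (h.trans hμWw) hwne
      · rw [hμWw] at h; exact h
    have hacc : I.flt1 g (some w) none :=
      aux_flt1_some_none I g w (hW.1.2.1.2 w g hμWw)
    have hins : (insert w (matchedSet μ g)).card ≤ (I.withCap f p).cap g := by
      refine (Finset.card_insert_le _ _).trans ?_
      exact Nat.succ_le_of_lt (lt_of_lt_of_le hlt (hW.1.1 g))
    exact hμp.2.2 w g ⟨hwlt, matchedSet μ g, Finset.Subset.refl _, hins,
      (I.resp_add g (matchedSet μ g) w hwM).mpr hacc⟩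
  -- workers unmatched in μW are unmatched in μ
  have hnone : ∀ w, μW w = none → μ w = none := by
    intro w hw
    rcases hW.2 μ hμp w with h | h
    · rw [h, hw]
    · rw [hw] at h
      cases hμw : μ w with
      | none => rfl
      | some g =>
        rw [hμw] at h
        exact absurd h (hμp.2.1.1 w g hμw)
  -- counting: card (matchedSet μ f) ≤ card (matchedSet μW f)
  have key : (matchedSet μ f).card ≤ (matchedSet μW f).card := by
    set N : Finset (Option F) := Finset.univ.image μ ∪ Finset.univ.image μW with hN
    have hmemμ : ∀ w : W, μ w ∈ N :=
      fun w => Finset.mem_union_left _ (Finset.mem_image_of_mem μ (Finset.mem_univ w))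
    have hmemW : ∀ w : W, μW w ∈ N :=
      fun w => Finset.mem_union_right _ (Finset.mem_image_of_mem μW (Finset.mem_univ w))
    have h1 : (Finset.univ : Finset W).card
        = ∑ o ∈ N, (Finset.univ.filter (fun w => μ w = o)).card :=
      Finset.card_eq_sum_card_fiberwise (fun w _ => hmemμ w)
    have h2 : (Finset.univ : Finset W).card
        = ∑ o ∈ N, (Finset.univ.filter (fun w => μW w = o)).card :=
      Finset.card_eq_sum_card_fiberwise (fun w _ => hmemW w)
    have hptw : ∀ o ∈ N, (Finset.univ.filter (fun w => μW w = o)).card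
        ≤ (Finset.univ.filter (fun w => μ w = o)).card := by
      intro o _
      cases o with
      | none =>
        refine Finset.card_le_card ?_
        intro w hw
        simp only [Finset.mem_filter, Finset.mem_univ, true_and] at hw ⊢
        exact hnone w hw
      | some g => exact hle g
    have hsum : ∑ o ∈ N, (Finset.univ.filter (fun w => μW w = o)).card
        = ∑ o ∈ N, (Finset.univ.filter (fun w => μ w = o)).card := by
      rw [← h1, ← h2]
    have heq := (Finset.sum_eq_sum_iff_of_le hptw).mp hsum
    by_cases hf : (some f : Option F) ∈ N
    · exact le_of_eq (heq (some f) hf).symm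
    · have hM : matchedSet μ f = ∅ := by
        rw [Finset.eq_empty_iff_forall_notMem]
        intro w hw
        exact hf (aux_mem_matchedSet.mp hw ▸ hmemμ w)
      simp [hM]
  -- inclusion: matchedSet μW f ⊆ matchedSet μ f, via f being unsaturated in I^{p+1}
  have hsub : matchedSet μW f ⊆ matchedSet μ f := by
    intro w hw
    by_contra hwM
    have hμWw : μW w = some f := aux_mem_matchedSet.mp hw
    have hwne : μ w ≠ some f := fun h => hwM (aux_mem_matchedSet.mpr h)
    have hwlt : I.wlt w (some f) (μ w) := by
      rcases hW.2 μ hμp w with h | h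
      · exact absurd (h.trans hμWw) hwne
      · rw [hμWw] at h; exact h
    have hacc : I.flt1 f (some w) none :=
      aux_flt1_some_none I f w (hW.1.2.1.2 w f hμWw)
    have hins : (insert w (matchedSet μ f)).card ≤ (I.withCap f (p + 1)).cap f := by
      refine (Finset.card_insert_le _ _).trans ?_
      have : (I.withCap f (p + 1)).cap f = p + 1 := by simp [MTO.withCap]
      rw [this]
      exact Nat.succ_le_succ hcard
    exact hμJ.2.2 w f ⟨hwlt, matchedSet μ f, Finset.Subset.refl _, hins,
      (I.resp_add f (matchedSet μ f) w hwM).mpr hacc⟩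
  exact (Finset.eq_of_subset_of_card_le hsub key).symm
end
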